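/- Let V_1,…,V_K be nonempty pairwise disjoint subsets of {1,…,N}, let a_k ∈ 𝔸_{V_k} for each k, set a = ∑_{k=1}^K a_k, let P = {V_1,…,V_K}, and let c ∈ ℝ^N have strictly positive entries. Then N^eff(P,c) ≥ N^eff(a,c) ≥ (min_{k∈{1,…,K}} N^eff(a_k,c)/|V_k|) · N^eff(P,c). -/

import Mathlib

open Finset

/-- The effective sample size `N^eff(a, c)` of an `N × N` matrix. -/
noncomputable def Neff {N : ℕ} (a : Matrix (Fin N) (Fin N) ℝ) (c : Fin N → ℝ) : ℝ :=
  (∑ i, ∑ j, a i j * c j) ^ 2 / (∑ i, (∑ j, a i j * c j) ^ 2)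

/-- The partition effective sample size `N^eff(P, c)` for `P = {V_1, …, V_K}`. -/
noncomputable def NeffP {N K : ℕ} (Vs : Fin K → Finset (Fin N)) (c : Fin N → ℝ) : ℝ :=
  (∑ k, ∑ j ∈ Vs k, c j) ^ 2 / (∑ k, ((Vs k).card : ℝ)⁻¹ * (∑ j ∈ Vs k, c j) ^ 2)

/-- Membership in 𝔸_V. -/
def memA {N : ℕ} (V : Finset (Fin N)) (a : Matrix (Fin N) (Fin N) ℝ) : Prop :=
  (∀ i j, 0 ≤ a i j) ∧
  (∀ i j, (i ∉ V ∨ j ∉ V) → a i j = 0) ∧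
  (∀ i ∈ V, ∑ j, a i j = 1) ∧
  (∀ j ∈ V, ∑ i, a i j = 1)

/-!
Write `r_k = a_k c`. Column stochasticity gives `∑ i, r_k i = ∑ j ∈ V_k, c j =: S_k`, and since
`r_k` is supported on `V_k` and the `V_k` are disjoint, the denominator of `N^eff(a, c)` splits
as `∑ k, Q_k` with `Q_k = ∑ i, r_k i ^ 2`. Cauchy–Schwarz on `V_k` gives `S_k ^ 2 / |V_k| ≤ Q_k`,
which is the upper bound; the identity `N^eff(a_k, c) / |V_k| * Q_k = S_k ^ 2 / |V_k|` turns the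
minimum into the lower bound.
-/

open Matrix Function

lemma sum_sq_sum_eq_sum_sum_sq_of_pairwise_disjoint {R ι κ : Type*} [CommSemiring R]
    [Fintype ι] [Fintype κ] (f : κ → ι → R) (V : κ → Finset ι) (hV : Pairwise (Disjoint on V))
    (hf : ∀ k, ∀ i ∉ V k, f k i = 0) :
    ∑ i, (∑ k, f k i) ^ 2 = ∑ k, ∑ i, f k i ^ 2 := by
  rw [sum_comm]
  refine sum_congr rfl fun i _ => ?_
  by_cases hi : ∃ k, i ∈ V k
  · obtain ⟨k, hk⟩ := hi
    have hl : ∀ l ≠ k, f l i = 0 := fun l hlk =>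
      hf l i (disjoint_right.mp (hV hlk) hk)
    rw [sum_eq_single k (fun l _ hlk => hl l hlk) (by simp),
      sum_eq_single k (fun l _ hlk => by simp [hl l hlk]) (by simp)]
  · push Not at hi
    simp [hf _ i (hi _)]

lemma Neff_eq {N : ℕ} (a : Matrix (Fin N) (Fin N) ℝ) (c : Fin N → ℝ) :
    Neff a c = (∑ i, (a *ᵥ c) i) ^ 2 / ∑ i, (a *ᵥ c) i ^ 2 := rfl

lemma sum_sum_eq_zero_of_sum_inv_card_mul_sq_eq_zero {ι κ : Type*} [Fintype κ]
    {Vs : κ → Finset ι} {c : ι → ℝ}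
    (h : ∑ k, ((Vs k).card : ℝ)⁻¹ * (∑ j ∈ Vs k, c j) ^ 2 = 0) :
    ∑ k, ∑ j ∈ Vs k, c j = 0 := by
  refine sum_eq_zero fun k hk => ?_
  rcases mul_eq_zero.mp ((sum_eq_zero_iff_of_nonneg fun _ _ => by positivity).mp h k hk) with
    hV | hS
  · simp_all
  · exact pow_eq_zero_iff two_ne_zero |>.mp hS

namespace memA

variable {N : ℕ} {V : Finset (Fin N)} {a : Matrix (Fin N) (Fin N) ℝ}

lemma mulVec_eq_zero_of_notMem (ha : memA V a) (c : Fin N → ℝ) {i : Fin N} (hi : i ∉ V) :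
    (a *ᵥ c) i = 0 := by
  simp [mulVec, dotProduct, ha.2.1 i _ (Or.inl hi)]

lemma sum_mulVec (ha : memA V a) (c : Fin N → ℝ) : ∑ i, (a *ᵥ c) i = ∑ j ∈ V, c j := by
  simp only [mulVec, dotProduct]
  rw [sum_comm, ← sum_subset (subset_univ V) fun j _ hj => sum_eq_zero fun i _ => by
    simp [ha.2.1 i j (Or.inr hj)]]
  exact sum_congr rfl fun j hj => by rw [← sum_mul, ha.2.2.2 j hj, one_mul]

lemma sq_sum_le_card_mul_sum_sq (ha : memA V a) (c : Fin N → ℝ) :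
    (∑ j ∈ V, c j) ^ 2 ≤ V.card * ∑ i, (a *ᵥ c) i ^ 2 := by
  have hsupp := fun i (hi : i ∉ V) => ha.mulVec_eq_zero_of_notMem c hi
  rw [← ha.sum_mulVec c, ← sum_subset (subset_univ V) fun i _ hi => hsupp i hi,
    ← sum_subset (subset_univ V) fun i _ hi => by simp [hsupp i hi]]
  exact _root_.sq_sum_le_card_mul_sum_sq

lemma inv_card_mul_sq_sum_le (ha : memA V a) (c : Fin N → ℝ) :
    (V.card : ℝ)⁻¹ * (∑ j ∈ V, c j) ^ 2 ≤ ∑ i, (a *ᵥ c) i ^ 2 := by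
  rcases V.eq_empty_or_nonempty with rfl | hV
  · rw [sum_empty, zero_pow two_ne_zero, mul_zero]
    positivity
  · rw [inv_mul_le_iff₀ (by simpa using hV)]
    exact ha.sq_sum_le_card_mul_sum_sq c

lemma Neff_div_card_mul_sum_sq (ha : memA V a) (c : Fin N → ℝ) :
    Neff a c / V.card * ∑ i, (a *ᵥ c) i ^ 2 = (V.card : ℝ)⁻¹ * (∑ j ∈ V, c j) ^ 2 := by
  rw [Neff_eq, ha.sum_mulVec]
  by_cases hQ : ∑ i, (a *ᵥ c) i ^ 2 = 0
  -- then Cauchy–Schwarz forces `∑ j ∈ V, c j = 0` as well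
  · have hS := ha.sq_sum_le_card_mul_sum_sq c
    rw [hQ, mul_zero] at hS
    simp [hQ, pow_eq_zero_iff two_ne_zero |>.mp (le_antisymm hS (sq_nonneg _))]
  · field_simp

end memA

lemma Neff_sum_eq {N K : ℕ} (Vs : Fin K → Finset (Fin N)) (hdisj : Pairwise (Disjoint on Vs))
    (A : Fin K → Matrix (Fin N) (Fin N) ℝ) (hA : ∀ k, memA (Vs k) (A k)) (c : Fin N → ℝ) :
    Neff (∑ k, A k) c = (∑ k, ∑ j ∈ Vs k, c j) ^ 2 / ∑ k, ∑ i, (A k *ᵥ c) i ^ 2 := by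
  simp only [Neff_eq, Matrix.sum_mulVec, Finset.sum_apply]
  rw [sum_comm, sum_sq_sum_eq_sum_sum_sq_of_pairwise_disjoint _ Vs hdisj
    fun k i hi => (hA k).mulVec_eq_zero_of_notMem c hi]
  simp only [fun k => (hA k).sum_mulVec c]

lemma sq_div_le_sq_div_and_mul_sq_div_le {S T Q m : ℝ} (hT : 0 ≤ T) (hS : T = 0 → S = 0)
    (hTQ : T ≤ Q) (hmQ : m * Q ≤ T) :
    S ^ 2 / Q ≤ S ^ 2 / T ∧ m * (S ^ 2 / T) ≤ S ^ 2 / Q := by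
  rcases hT.eq_or_lt with hT0 | hT0
  · simp [hS hT0.symm]
  refine ⟨div_le_div_of_nonneg_left (sq_nonneg S) hT0 hTQ, ?_⟩
  rw [← mul_div_assoc, div_le_div_iff₀ hT0 (hT0.trans_le hTQ)]
  nlinarith [sq_nonneg S]

theorem stmt_10_general {N K : ℕ} (hK : 0 < K)
    (Vs : Fin K → Finset (Fin N))
    (hdisj : ∀ k l, k ≠ l → Disjoint (Vs k) (Vs l))
    (A : Fin K → Matrix (Fin N) (Fin N) ℝ) (hA : ∀ k, memA (Vs k) (A k))
    (c : Fin N → ℝ) :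
    Neff (∑ k, A k) c ≤ NeffP Vs c ∧
    (Finset.univ.inf' ⟨⟨0, hK⟩, Finset.mem_univ _⟩
        (fun k => Neff (A k) c / ((Vs k).card : ℝ))) * NeffP Vs c
      ≤ Neff (∑ k, A k) c := by
  rw [Neff_sum_eq Vs hdisj A hA c, NeffP]
  refine sq_div_le_sq_div_and_mul_sq_div_le (sum_nonneg fun k _ => by positivity)
    sum_sum_eq_zero_of_sum_inv_card_mul_sq_eq_zero
    (sum_le_sum fun k _ => (hA k).inv_card_mul_sq_sum_le c) ?_
  rw [mul_sum]
  refine sum_le_sum fun k _ => ?_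
  rw [← (hA k).Neff_div_card_mul_sum_sq c]
  exact mul_le_mul_of_nonneg_right (inf'_le _ (mem_univ k)) (by positivity)

theorem stmt_10 {N K : ℕ} (hN : 1 ≤ N) (hK : 0 < K)
    (Vs : Fin K → Finset (Fin N))
    (hne : ∀ k, (Vs k).Nonempty)
    (hdisj : ∀ k l, k ≠ l → Disjoint (Vs k) (Vs l))
    (A : Fin K → Matrix (Fin N) (Fin N) ℝ) (hA : ∀ k, memA (Vs k) (A k))
    (c : Fin N → ℝ) (hc : ∀ j, 0 < c j) :
    Neff (∑ k, A k) c ≤ NeffP Vs c ∧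
    (Finset.univ.inf' ⟨⟨0, hK⟩, Finset.mem_univ _⟩
        (fun k => Neff (A k) c / ((Vs k).card : ℝ))) * NeffP Vs c
      ≤ Neff (∑ k, A k) c :=
  stmt_10_general hK Vs hdisj A hA c
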